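/- arXiv:2301.05806 — 5 statements merged into one kernel-verified Lean document; each statement's English description precedes it below -/
import Mathlib

section
/- For every 3-coloring of the edges of the complete graph K_n on n vertices, there exists a monochromatic connected component containing at least n/2 vertices. -/
open Finset

/-- Two vertices are connected by the edge set `E` (of a hypergraph)
if they are joined by a walk of edges from `E`. -/
def connBy {V : Type*} (E : Set (Finset V)) : V → V → Prop :=
  Relation.ReflTransGen (fun u w => ∃ e ∈ E, u ∈ e ∧ w ∈ e)

/-- The connected component of `v` in the hypergraph with edge set `E`. -/
def compOf {V : Type*} (E : Set (Finset V)) (v : V) : Set V :=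
  {u | connBy E u v}

/-!
Let `X` be the component of colour 2 of some vertex. If `X` is everything we are done; otherwise
every edge between `X` and its complement has colour 0 or 1. Pick such an edge `xy`, of colour `c`,
and let `C` be the component of colour `c` of `x`; the cross edges between `C` and its complement
have the other colour `d`. Then `(X ∩ C) ∪ (Xᶜ \ C)` lies in `C` or in a single component of
colour `d` (it contains a complete bipartite graph of colour `d` with sides `X ∩ C ∋ x` and
`Xᶜ \ C`), and likewise `(Xᶜ ∩ C) ∪ (X \ C)`, with `y ∈ Xᶜ ∩ C`. These two sets cover all
vertices, so one of them has at least `n / 2` elements.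
-/

section MonoComponents

variable {V κ : Type*}

theorem connBy_symm {E : Set (Finset V)} {u w : V} (h : connBy E u w) : connBy E w u :=
  haveI : Std.Symm fun u w : V => ∃ e ∈ E, u ∈ e ∧ w ∈ e :=
    ⟨fun _ _ ⟨e, he, hu, hw⟩ => ⟨e, he, hw, hu⟩⟩
  Std.Symm.symm (r := Relation.ReflTransGen _) _ _ h

def colorClass (χ : Finset V → κ) (c : κ) : Set (Finset V) :=
  {e | e.card = 2 ∧ χ e = c}

theorem connBy_of_color [DecidableEq V] {χ : Finset V → κ} {c : κ} {u w : V} (h : u ≠ w)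
    (hc : χ {u, w} = c) : connBy (colorClass χ c) u w :=
  Relation.ReflTransGen.single ⟨{u, w}, ⟨card_pair h, hc⟩, by simp, by simp⟩

theorem color_ne_of_mem_compOf_of_notMem [DecidableEq V] {χ : Finset V → κ} {c : κ} {v u w : V}
    (hu : u ∈ compOf (colorClass χ c) v) (hw : w ∉ compOf (colorClass χ c) v) :
    χ {u, w} ≠ c := fun hc =>
  hw <| (connBy_symm (connBy_of_color (by rintro rfl; exact hw hu) hc)).trans hu

theorem union_subset_compOf_of_forall_color [DecidableEq V] {χ : Finset V → κ} {c : κ}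
    {P Q : Set V} {p q : V} (hp : p ∈ P) (hq : q ∈ Q)
    (hPQ : ∀ a ∈ P, ∀ b ∈ Q, a ≠ b ∧ χ {a, b} = c) :
    P ∪ Q ⊆ compOf (colorClass χ c) p := by
  have hQ : ∀ b ∈ Q, connBy (colorClass χ c) b p := fun b hb =>
    connBy_symm (connBy_of_color (hPQ p hp b hb).1 (hPQ p hp b hb).2)
  rintro u (hu | hu)
  · exact (connBy_of_color (hPQ u hu q hq).1 (hPQ u hu q hq).2).trans (hQ q hq)
  · exact hQ u hu

def LiesInMonoComponent (χ : Finset V → κ) (S : Set V) : Prop :=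
  ∃ c v, S ⊆ compOf (colorClass χ c) v

theorem liesInMonoComponent_union [DecidableEq V] {χ : Finset V → κ} {c d : κ} {v p : V}
    {P Q : Set V} (hP : P ⊆ compOf (colorClass χ c) v) (hp : p ∈ P)
    (hQ : ∀ b ∈ Q, b ∉ compOf (colorClass χ c) v)
    (hPQ : ∀ a ∈ P, ∀ b ∈ Q, χ {a, b} = c ∨ χ {a, b} = d) :
    LiesInMonoComponent χ (P ∪ Q) := by
  rcases Q.eq_empty_or_nonempty with rfl | ⟨q, hq⟩
  · exact ⟨c, v, by simpa using hP⟩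
  refine ⟨d, p, union_subset_compOf_of_forall_color hp hq fun a ha b hb => ⟨?_, ?_⟩⟩
  · rintro rfl
    exact hQ a hb (hP ha)
  · exact (hPQ a ha b hb).resolve_left
      (color_ne_of_mem_compOf_of_notMem (hP ha) (hQ b hb))

theorem exists_cover_of_bicolored_cut [DecidableEq V] {χ : Finset V → κ} {c d : κ} {X : Set V}
    {x y : V} (hx : x ∈ X) (hy : y ∉ X) (hxy : χ {x, y} = c)
    (hcut : ∀ a ∈ X, ∀ b ∉ X, χ {a, b} = c ∨ χ {a, b} = d) :
    ∃ S T, S ∪ T = Set.univ ∧ LiesInMonoComponent χ S ∧ LiesInMonoComponent χ T := by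
  set C := compOf (colorClass χ c) x
  have hxC : x ∈ C := Relation.ReflTransGen.refl
  have hyC : y ∈ C := connBy_symm (connBy_of_color (by rintro rfl; exact hy hx) hxy)
  refine ⟨X ∩ C ∪ Xᶜ \ C, Xᶜ ∩ C ∪ X \ C, ?_, ?_, ?_⟩
  · ext u
    by_cases huX : u ∈ X <;> by_cases huC : u ∈ C <;> simp [huX, huC]
  · exact liesInMonoComponent_union Set.inter_subset_right ⟨hx, hxC⟩ (fun b hb => hb.2)
      fun a ha b hb => hcut a ha.1 b hb.1
  · refine liesInMonoComponent_union (d := d) Set.inter_subset_right ⟨hy, hyC⟩ (fun b hb => hb.2)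
      fun a ha b hb => ?_
    rw [pair_comm]
    exact hcut b hb.1 a ha.1

theorem exists_cover_by_two_monoComponents [DecidableEq V] (χ : Finset V → Fin 3) (v : V) :
    ∃ S T, S ∪ T = Set.univ ∧ LiesInMonoComponent χ S ∧ LiesInMonoComponent χ T := by
  set X := compOf (colorClass χ 2) v
  by_cases hX : ∀ y, y ∈ X
  · exact ⟨X, X, by simpa [Set.eq_univ_iff_forall] using hX, ⟨2, v, le_rfl⟩, ⟨2, v, le_rfl⟩⟩
  push Not at hX
  obtain ⟨y, hy⟩ := hX
  have hv : v ∈ X := Relation.ReflTransGen.refl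
  have two_colors : ∀ i : Fin 3, i ≠ 2 → i = 0 ∨ i = 1 := by decide
  have hcut : ∀ a ∈ X, ∀ b ∉ X, χ {a, b} = 0 ∨ χ {a, b} = 1 := fun a ha b hb =>
    two_colors _ (color_ne_of_mem_compOf_of_notMem ha hb)
  rcases hcut v hv y hy with h0 | h1
  · exact exists_cover_of_bicolored_cut hv hy h0 hcut
  · exact exists_cover_of_bicolored_cut hv hy h1 fun a ha b hb => (hcut a ha b hb).symm

theorem exists_half_le_ncard_compOf [Finite V] {χ : Finset V → κ} {S T : Set V}
    (hST : S ∪ T = Set.univ) (hS : LiesInMonoComponent χ S) (hT : LiesInMonoComponent χ T) :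
    ∃ c v, (Nat.card V : ℚ) / 2 ≤ (compOf (colorClass χ c) v).ncard := by
  obtain ⟨c, v, hSc⟩ := hS
  obtain ⟨d, w, hTd⟩ := hT
  have hcard : Nat.card V ≤ S.ncard + T.ncard := by
    rw [← Set.ncard_univ, ← hST]
    exact Set.ncard_union_le S T
  have hS' := Set.ncard_le_ncard hSc
  have hT' := Set.ncard_le_ncard hTd
  rcases le_total T.ncard S.ncard with h | h
  · refine ⟨c, v, ?_⟩
    rw [div_le_iff₀ two_pos]
    exact_mod_cast (by omega : Nat.card V ≤ _ * 2)
  · refine ⟨d, w, ?_⟩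
    rw [div_le_iff₀ two_pos]
    exact_mod_cast (by omega : Nat.card V ≤ _ * 2)

end MonoComponents

theorem stmt0 (n : ℕ) (hn : 1 ≤ n) (χ : Finset (Fin n) → Fin 3) :
    ∃ (c : Fin 3) (v : Fin n),
      (n : ℚ) / 2 ≤ (compOf {e | e.card = 2 ∧ χ e = c} v).ncard := by
  obtain ⟨S, T, hST, hS, hT⟩ := exists_cover_by_two_monoComponents χ ⟨0, hn⟩
  have h := exists_half_le_ncard_compOf hST hS hT
  rwa [Nat.card_eq_fintype_card, Fintype.card_fin] at h
end

section
/- For all n ≥ r ≥ 2, for every r-coloring of the edges of the complete r-uniform hypergraph K_n^r on n vertices, there is a monochromatic component containing all n vertices. -/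
open Finset

lemma compOf_eq_of_mem {V : Type*} {E : Set (Finset V)} {e : Finset V} (he : e ∈ E)
    {u w : V} (hu : u ∈ e) (hw : w ∈ e) : compOf E u = compOf E w := by
  ext x
  constructor
  · intro hx; exact Relation.ReflTransGen.tail hx ⟨e, he, hu, hw⟩
  · intro hx; exact Relation.ReflTransGen.tail hx ⟨e, he, hw, hu⟩

theorem stmt1 (n r : ℕ) (hr : 2 ≤ r) (hn : r ≤ n) (χ : Finset (Fin n) → Fin r) :
    ∃ (c : Fin r) (v : Fin n),
      compOf {e | e.card = r ∧ χ e = c} v = Set.univ := by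
  classical
  by_contra hcon
  push_neg at hcon
  set f : Fin r → Fin n → Set (Fin n) :=
    fun c v => compOf {e | e.card = r ∧ χ e = c} v with hf
  have hn0 : 0 < n := lt_of_lt_of_le (by omega) hn
  let v₀ : Fin n := ⟨0, hn0⟩
  -- every color has at least two components
  have hnontriv : ∀ c : Fin r, ∃ u w : Fin n, f c u ≠ f c w := by
    intro c
    have h1 : f c v₀ ≠ Set.univ := hcon c v₀
    have h2 : ∃ u : Fin n, u ∉ f c v₀ := by
      by_contra h3
      push_neg at h3
      exact h1 (Set.eq_univ_of_forall h3)
    obtain ⟨u, hu⟩ := h2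
    refine ⟨u, v₀, fun heq => hu ?_⟩
    rw [← heq]
    exact Relation.ReflTransGen.refl
  -- crossing sets
  set Cross : Finset (Fin n) → Prop :=
    fun S => ∀ c : Fin r, ∃ u ∈ S, ∃ w ∈ S, f c u ≠ f c w with hCross
  choose uu ww huw using hnontriv
  have hS0 : Cross ((univ : Finset (Fin r)).biUnion (fun c => {uu c, ww c})) := by
    intro c
    refine ⟨uu c, ?_, ww c, ?_, huw c⟩ <;>
      exact mem_biUnion.2 ⟨c, mem_univ c, by simp⟩
  have hex : ∃ k, ∃ S : Finset (Fin n), Cross S ∧ S.card = k := ⟨_, _, hS0, rfl⟩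
  obtain ⟨S, hS, hScard⟩ := Nat.find_spec hex
  have hmin : ∀ T : Finset (Fin n), Cross T → S.card ≤ T.card := by
    intro T hT
    rw [hScard]
    exact Nat.find_min' hex ⟨T, hT, rfl⟩
  -- erasing any vertex destroys crossing
  have herase : ∀ v ∈ S, ∃ c : Fin r,
      ∀ u ∈ S.erase v, ∀ w ∈ S.erase v, f c u = f c w := by
    intro v hv
    have h1 : ¬ Cross (S.erase v) := by
      intro h2
      have := hmin _ h2
      rw [card_erase_of_mem hv] at this
      have hpos : 0 < S.card := card_pos.2 ⟨v, hv⟩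
      omega
    simp only [hCross] at h1
    push_neg at h1
    obtain ⟨c, hc⟩ := h1
    exact ⟨c, hc⟩
  choose g hg using herase
  -- S has at most r elements
  have hcardle : S.card ≤ r := by
    by_contra hgt
    push_neg at hgt
    have h3 : 3 ≤ S.card := by omega
    set g' : Fin n → Fin r := fun v => if h : v ∈ S then g v h else ⟨0, by omega⟩ with hg'
    obtain ⟨v, hv, w, hw, hvw, hgvw⟩ :=
      Finset.exists_ne_map_eq_of_card_lt_of_maps_to (t := (univ : Finset (Fin r)))
        (by simpa using hgt) (fun a _ => mem_univ (g' a))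
    set c : Fin r := g' v with hc
    -- pick x in S distinct from v, w
    have hx : ∃ x ∈ S, x ≠ v ∧ x ≠ w := by
      have h4 : 0 < ((S.erase v).erase w).card := by
        rw [card_erase_of_mem (show w ∈ S.erase v from mem_erase.2 ⟨Ne.symm hvw, hw⟩), card_erase_of_mem hv]
        omega
      obtain ⟨x, hx⟩ := card_pos.1 h4
      rw [mem_erase, mem_erase] at hx
      exact ⟨x, hx.2.2, hx.2.1, hx.1⟩
    obtain ⟨x, hxS, hxv, hxw⟩ := hx
    have hgv : ∀ a ∈ S.erase v, ∀ b ∈ S.erase v, f c a = f c b := by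
      have := hg v hv
      simpa [hc, hg', dif_pos hv] using this
    have hgw : ∀ a ∈ S.erase w, ∀ b ∈ S.erase w, f c a = f c b := by
      have := hg w hw
      have hcw : c = g w hw := by rw [hgvw]; simp [hg', dif_pos hw]
      rw [hcw]
      exact this
    have hall : ∀ a ∈ S, f c a = f c x := by
      intro a ha
      by_cases hav : a = v
      · subst hav
        exact hgw a (mem_erase.2 ⟨hvw, ha⟩) x (mem_erase.2 ⟨hxw, hxS⟩)
      · exact hgv a (mem_erase.2 ⟨hav, ha⟩) x (mem_erase.2 ⟨hxv, hxS⟩)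
    obtain ⟨u₁, hu₁, u₂, hu₂, hne⟩ := hS c
    exact hne ((hall u₁ hu₁).trans (hall u₂ hu₂).symm)
  -- pad S to an r-set e
  obtain ⟨e, hSe, -, hecard⟩ :=
    exists_subsuperset_card_eq (S.subset_univ) hcardle (by simpa using hn)
  set c : Fin r := χ e with hc
  have hemem : e ∈ {e : Finset (Fin n) | e.card = r ∧ χ e = c} := ⟨hecard, rfl⟩
  obtain ⟨u₁, hu₁, u₂, hu₂, hne⟩ := hS c
  exact hne (compOf_eq_of_mem hemem (hSe hu₁) (hSe hu₂))
end

section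
/- For all n ≥ r ≥ 3, if G is an r-uniform hypergraph on n vertices with minimum (r−1)-degree δ_{r−1}(G) ≥ rn/(r+1) − (r−1), then for every (r+1)-coloring of the edges of G there exists a monochromatic component of order at least rn/(r+1). -/
open Finset

/-!
Suppose every monochromatic component has fewer than `rn/(r+1)` vertices, and view the colour
classes as `r + 1` partitions of the vertex set. The degree condition lets every `(r-1)`-set `T`
escape any small set containing it along an edge through `T`; so `T` lies in one class of at least
two colours. Averaging gives a pair sharing a class in at most `r - 1` colours, and adding vertices
one at a time yields an `(r-1)`-set `S` sharing a class in exactly two colours `i` and `j`.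
Fix `s₀ ∈ S`, a vertex `c` that is `i`- but not `j`-connected to `s₀`, and `d` with the roles
swapped. For every other colour `l`, all of `S` but one vertex, the outlier of `l`, is
`l`-connected to `c`, and distinct colours have distinct outliers. Examining which colours link `S`
with one or two of its vertices exchanged shows that every vertex lies in all but at most one of
the `r + 1` classes formed by the `i`- and `j`-classes of `s₀` and the `l`-classes of `c`. (For
`r = 3` these exchanged sets are pairs and carry too little information; there `d` helps, since a
pair separated by both `i` and `j` is linked by each of the two remaining colours.) The sizes of
these classes add up to at least `rn`, so one of them has at least `rn/(r+1)` vertices.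
-/

open scoped Classical

namespace SetoidFamily

variable {V ι : Type*}

section Defs

variable (R : ι → Setoid V)

noncomputable def classOf [Fintype V] (l : ι) (v : V) : Finset V := {u | R l u v}

def IsLinked (l : ι) (T : Finset V) : Prop := ∀ u ∈ T, ∀ w ∈ T, R l u w

noncomputable def linkColors [Fintype ι] (T : Finset V) : Finset ι := {l | IsLinked R l T}

end Defs

variable {R : ι → Setoid V} {l m : ι} {u v w : V} {T T' : Finset V}

section Linked

lemma IsLinked.mono (h : IsLinked R l T) (hT : T' ⊆ T) : IsLinked R l T' :=
  fun u hu w hw => h u (hT hu) w (hT hw)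

@[simp] lemma mem_linkColors [Fintype ι] : l ∈ linkColors R T ↔ IsLinked R l T := by
  simp [linkColors]

lemma linkColors_anti [Fintype ι] (hT : T' ⊆ T) : linkColors R T ⊆ linkColors R T' :=
  fun _ hl => mem_linkColors.2 ((mem_linkColors.1 hl).mono hT)

variable [Fintype V]

@[simp] lemma mem_classOf : u ∈ classOf R l v ↔ R l u v := by simp [classOf]

lemma mem_classOf_self : v ∈ classOf R l v := mem_classOf.2 ((R l).refl' v)

lemma mem_classOf_of_rel (huw : R l u w) (hw : w ∈ classOf R l v) : u ∈ classOf R l v :=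
  mem_classOf.2 ((R l).trans' huw (mem_classOf.1 hw))

lemma IsLinked.subset_classOf (h : IsLinked R l T) (hv : v ∈ T) : T ⊆ classOf R l v :=
  fun u hu => mem_classOf.2 (h u hu v hv)

lemma isLinked_of_subset_classOf (h : T ⊆ classOf R l v) : IsLinked R l T :=
  fun _ hu _ hw => (R l).trans' (mem_classOf.1 (h hu)) ((R l).symm' (mem_classOf.1 (h hw)))

lemma IsLinked.union [DecidableEq V] (h : IsLinked R l T) (h' : IsLinked R l T') (hv : v ∈ T)
    (hv' : v ∈ T') : IsLinked R l (T ∪ T') :=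
  isLinked_of_subset_classOf (union_subset (h.subset_classOf hv) (h'.subset_classOf hv'))

lemma not_rel_of_mem_of_notMem (hu : u ∈ classOf R l v) (hw : w ∉ classOf R l v) : ¬R l u w :=
  fun h => hw (mem_classOf_of_rel ((R l).symm' h) hu)

lemma IsLinked.notMem_classOf (h : IsLinked R l T) (hu : u ∈ T) (hw : w ∈ T)
    (hwv : w ∉ classOf R l v) : u ∉ classOf R l v :=
  fun huv => hwv (mem_classOf_of_rel (h w hw u hu) huv)

end Linked

variable [Fintype V] [Fintype ι] [DecidableEq V]

lemma sum_card_eq_sum_card_filter_mem (A : ι → Finset V) :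
    ∑ l, #(A l) = ∑ v, #{l | v ∈ A l} := by
  simpa [bipartiteAbove, bipartiteBelow] using sum_card_bipartiteAbove_eq_sum_card_bipartiteBelow
    (s := univ) (t := univ) (r := fun l v => v ∈ A l)

lemma card_mul_le_sum_card (A : ι → Finset V) (hA : ∀ v, #{l | v ∉ A l} ≤ 1) :
    Fintype.card V * (Fintype.card ι - 1) ≤ ∑ l, #(A l) := by
  rw [sum_card_eq_sum_card_filter_mem, ← smul_eq_mul, ← card_univ]
  refine card_nsmul_le_sum _ _ _ fun v _ => ?_
  have := card_filter_add_card_filter_not (s := univ) (fun l => v ∈ A l)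
  have := hA v
  rw [card_univ] at *
  omega

section Greedy

lemma exists_card_linkColors_insert_le (hproper : ∀ l v, #(classOf R l v) < Fintype.card V)
    {C : Finset V} (hC : #C < Fintype.card V) (hCne : C.Nonempty) :
    ∃ v ∉ C, #(linkColors R (insert v C)) ≤ #(linkColors R C) - 1 := by
  -- the subtraction truncates: when no colour links `C`, any new vertex will do
  obtain ⟨l, hl⟩ | hempty := (linkColors R C).eq_empty_or_nonempty.symm
  · obtain ⟨c, hc⟩ := hCne
    obtain ⟨v, -, hv⟩ := exists_mem_notMem_of_card_lt_card
      (by rw [card_univ]; exact hproper l c : #(classOf R l c) < #(univ : Finset V))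
    have hCsub := (mem_linkColors.1 hl).subset_classOf hc
    refine ⟨v, fun hvC => hv (hCsub hvC), ?_⟩
    have hsub : linkColors R (insert v C) ⊆ (linkColors R C).erase l := fun l' hl' => by
      refine mem_erase.2 ⟨?_, linkColors_anti (subset_insert v C) hl'⟩
      rintro rfl
      exact hv ((mem_linkColors.1 hl').subset_classOf (mem_insert_of_mem hc) (mem_insert_self v C))
    simpa [card_erase_of_mem hl] using card_le_card hsub
  · obtain ⟨v, -, hv⟩ :=
      exists_mem_notMem_of_card_lt_card (by rwa [card_univ] : #C < #(univ : Finset V))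
    refine ⟨v, hv, ?_⟩
    simpa [hempty] using card_le_card (linkColors_anti (subset_insert v C) (R := R))

variable {r : ℕ} (hι : Fintype.card ι = r + 1)
  (hsmall : ∀ l v, (r + 1) * #(classOf R l v) < r * Fintype.card V)
include hι hsmall

lemma exists_card_linkColors_pair_le (v₀ : V) :
    ∃ C : Finset V, #C = 2 ∧ #(linkColors R C) + 2 ≤ r + 1 := by
  have hsum : ∑ l, #(classOf R l v₀) < r * Fintype.card V := by
    have : ∑ l, (r + 1) * #(classOf R l v₀) < ∑ _l : ι, r * Fintype.card V :=
      sum_lt_sum_of_nonempty (card_pos.1 (by simp [hι])) fun l _ => hsmall l v₀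
    rw [← mul_sum, sum_const, card_univ, hι, smul_eq_mul] at this
    exact lt_of_mul_lt_mul_left this (Nat.zero_le _)
  obtain ⟨v, hv⟩ : ∃ v, #{l | v ∈ classOf R l v₀} < r := by
    by_contra! h
    have := card_nsmul_le_sum univ (fun v => #{l | v ∈ classOf R l v₀}) r fun v _ => h v
    rw [← sum_card_eq_sum_card_filter_mem, card_univ, smul_eq_mul] at this
    linarith
  have hne : v ≠ v₀ := by
    rintro rfl
    simp [hι] at hv
  have hsub : linkColors R {v, v₀} ⊆ ({l | v ∈ classOf R l v₀} : Finset ι) :=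
    fun _ hl => by simpa using (mem_linkColors.1 hl) v (by simp) v₀ (by simp)
  exact ⟨{v, v₀}, card_pair hne, by have := card_le_card hsub; omega⟩

lemma exists_card_linkColors_le_two (hr : 3 ≤ r) (hV : r - 1 ≤ Fintype.card V) :
    ∃ S : Finset V, #S = r - 1 ∧ #(linkColors R S) ≤ 2 := by
  have hproper (l : ι) (v : V) : #(classOf R l v) < Fintype.card V :=
    lt_of_mul_lt_mul_left ((hsmall l v).trans_le (Nat.mul_le_mul_right _ r.le_succ)) (Nat.zero_le _)
  suffices ∀ k, 2 ≤ k → k ≤ r - 1 →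
      ∃ C : Finset V, #C = k ∧ #(linkColors R C) + k ≤ r + 1 by
    obtain ⟨S, hS, hlink⟩ := this (r - 1) (by omega) le_rfl
    exact ⟨S, hS, by omega⟩
  intro k hk
  induction k, hk using Nat.le_induction with
  | base =>
    intro _
    obtain ⟨v₀⟩ : Nonempty V := Fintype.card_pos_iff.1 (by omega)
    exact exists_card_linkColors_pair_le hι hsmall v₀
  | succ k hk ih =>
    intro hkr
    obtain ⟨C, hC, hlink⟩ := ih (by omega)
    obtain ⟨v, hv, hle⟩ :=
      exists_card_linkColors_insert_le hproper (C := C) (by omega) (card_pos.1 (by omega))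
    exact ⟨insert v C, by rw [card_insert_of_notMem hv, hC], by omega⟩

end Greedy

omit [Fintype V] in
lemma card_insert_erase {S : Finset V} {s : V} (hv : v ∉ S) (hs : s ∈ S) :
    #(insert v (S.erase s)) = #S := by
  rw [card_insert_of_notMem fun h => hv (mem_of_mem_erase h), card_erase_add_one hs]

lemma two_le_card_linkColors (hT : T.Nonempty) (hlinked : (linkColors R T).Nonempty)
    (hescape : ∀ l v, T ⊆ classOf R l v →
      ∃ z ∉ classOf R l v, (linkColors R (insert z T)).Nonempty) :
    2 ≤ #(linkColors R T) := by
  obtain ⟨t, ht⟩ := hT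
  obtain ⟨l, hl⟩ := hlinked
  obtain ⟨z, hz, l', hl'⟩ := hescape l t ((mem_linkColors.1 hl).subset_classOf ht)
  refine one_lt_card.2 ⟨l, hl, l', linkColors_anti (subset_insert z T) hl', ?_⟩
  rintro rfl
  exact hz ((mem_linkColors.1 hl').subset_classOf (mem_insert_of_mem ht) (mem_insert_self z T))

lemma exists_mem_classOf_notMem_classOf {S : Finset V} {i j : ι} {s₀ : V}
    (hS : linkColors R S = {i, j}) (hs₀ : s₀ ∈ S)
    (hescape : ∀ l v, S ⊆ classOf R l v →
      ∃ z ∉ classOf R l v, (linkColors R (insert z S)).Nonempty) :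
    ∃ c, c ∈ classOf R i s₀ ∧ c ∉ classOf R j s₀ := by
  have hj : IsLinked R j S := mem_linkColors.1 (by simp [hS])
  obtain ⟨c, hc, l, hl⟩ := hescape j s₀ (hj.subset_classOf hs₀)
  have hcl : c ∈ classOf R l s₀ :=
    (mem_linkColors.1 hl).subset_classOf (mem_insert_of_mem hs₀) (mem_insert_self c S)
  have hlS : l ∈ ({i, j} : Finset ι) := hS ▸ linkColors_anti (subset_insert c S) hl
  obtain rfl | rfl := mem_insert.1 hlS |>.imp_right mem_singleton.1
  · exact ⟨c, hcl, hc⟩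
  · exact absurd hcl hc

variable (R) in
structure Frame (r : ℕ) where
  S : Finset V
  i : ι
  j : ι
  s₀ : V
  c : V
  d : V
  card_S : #S = r - 1
  linkColors_S : linkColors R S = {i, j}
  i_ne_j : i ≠ j
  s₀_mem : s₀ ∈ S
  c_mem : c ∈ classOf R i s₀
  c_notMem : c ∉ classOf R j s₀
  d_mem : d ∈ classOf R j s₀
  d_notMem : d ∉ classOf R i s₀

namespace Frame

variable {r : ℕ} (F : Frame R r)

section
omit [DecidableEq V]

lemma isLinked_iff : IsLinked R l F.S ↔ l = F.i ∨ l = F.j := by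
  rw [← mem_linkColors, F.linkColors_S, mem_insert, mem_singleton]

lemma subset_classOf (hl : IsLinked R l F.S) : F.S ⊆ classOf R l F.s₀ :=
  hl.subset_classOf F.s₀_mem

lemma notMem_S_of_notMem_classOf (hl : IsLinked R l F.S) (hv : v ∉ classOf R l F.s₀) :
    v ∉ F.S :=
  fun h => hv (F.subset_classOf hl h)

lemma card_compl_linkColors (hι : Fintype.card ι = r + 1) : #(linkColors R F.S)ᶜ = r - 1 := by
  rw [card_compl, F.linkColors_S, card_pair F.i_ne_j, hι]
  omega

lemma c_notMem_S : F.c ∉ F.S :=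
  F.notMem_S_of_notMem_classOf (F.isLinked_iff.2 (Or.inr rfl)) F.c_notMem

noncomputable def anchor (l : ι) : V := if IsLinked R l F.S then F.s₀ else F.c

end

def IsOutlier (l : ι) (s : V) : Prop :=
  s ∈ F.S ∧ F.S.erase s ⊆ classOf R l F.c ∧ s ∉ classOf R l F.c

lemma IsOutlier.eq_of_notMem {F : Frame R r} {s : V} (h : F.IsOutlier l s) (hv : v ∈ F.S)
    (hvl : v ∉ classOf R l F.c) : v = s :=
  by_contra fun hne => hvl (h.2.1 (mem_erase.2 ⟨hne, hv⟩))

variable (hr : 3 ≤ r) (hι : Fintype.card ι = r + 1)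
  (h2 : ∀ T : Finset V, #T = r - 1 → 2 ≤ #(linkColors R T))
include hr hι h2

lemma mem_classOf_i_or_mem_classOf_j (v : V) :
    v ∈ classOf R F.i F.s₀ ∨ v ∈ classOf R F.j F.s₀ := by
  by_contra! hv
  have hvS := F.notMem_S_of_notMem_classOf (F.isLinked_iff.2 (Or.inl rfl)) hv.1
  -- exchanging any `s ∈ S` for `v` gives a set linked by at least two colours other than `i`,
  -- `j`, and distinct `s` need disjoint sets of colours: more than the `r - 1` colours available
  let L : V → Finset ι := fun s => linkColors R (insert v (F.S.erase s))
  have hL : ∀ s ∈ F.S, L s ⊆ (linkColors R F.S)ᶜ := by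
    intro s hs l hl
    rw [mem_compl]
    intro hlS
    obtain ⟨t, ht⟩ : (F.S.erase s).Nonempty :=
      card_pos.1 (by rw [card_erase_of_mem hs, F.card_S]; omega)
    have hvl : v ∈ classOf R l F.s₀ := mem_classOf_of_rel
      ((mem_linkColors.1 hl) v (mem_insert_self _ _) t (mem_insert_of_mem ht))
      (F.subset_classOf (mem_linkColors.1 hlS) (mem_of_mem_erase ht))
    obtain h | h := F.isLinked_iff.1 (mem_linkColors.1 hlS)
    · exact hv.1 (h ▸ hvl)
    · exact hv.2 (h ▸ hvl)
  have hdisj : (F.S : Set V).PairwiseDisjoint L := by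
    intro s hs s' hs' hne
    refine disjoint_left.2 fun l hl hl' => mem_compl.1 (hL s hs hl) (mem_linkColors.2 ?_)
    refine ((mem_linkColors.1 hl).union (mem_linkColors.1 hl') (mem_insert_self _ _)
      (mem_insert_self _ _)).mono fun t ht => ?_
    by_cases hts : t = s
    · exact mem_union_right _ (mem_insert_of_mem (mem_erase.2 ⟨hts ▸ hne, ht⟩))
    · exact mem_union_left _ (mem_insert_of_mem (mem_erase.2 ⟨hts, ht⟩))
  have hsum : #F.S * 2 ≤ ∑ s ∈ F.S, #(L s) := by
    rw [← smul_eq_mul]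
    exact card_nsmul_le_sum _ _ _ fun s hs => h2 _ (by rw [card_insert_erase hvS hs, F.card_S])
  have hcard := card_le_card (biUnion_subset.2 hL)
  rw [card_biUnion hdisj, F.card_compl_linkColors hι] at hcard
  rw [F.card_S] at hsum
  omega

lemma exists_outliers :
    ∃ o : ι → V, (∀ l, ¬IsLinked R l F.S → F.IsOutlier l (o l)) ∧
      Set.InjOn o {l | ¬IsLinked R l F.S} := by
  -- `s ∈ S` is the outlier of a colour linking `S` with `s` exchanged for `c`; this assignment is
  -- injective, hence onto the `r - 1` colours not linking `S`
  have hf : ∀ s ∈ F.S, ∃ l, ¬IsLinked R l F.S ∧ F.IsOutlier l s := by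
    intro s hs
    have hT : #(insert F.c (F.S.erase s)) = r - 1 := by
      rw [card_insert_erase F.c_notMem_S hs, F.card_S]
    obtain ⟨t, ht⟩ : (F.S.erase s).Nonempty :=
      card_pos.1 (by rw [card_erase_of_mem hs, F.card_S]; omega)
    obtain ⟨l, hl, hli⟩ := exists_mem_ne (h2 _ hT) F.i
    have hlT := mem_linkColors.1 hl
    have hsub : F.S.erase s ⊆ classOf R l F.c :=
      (subset_insert _ _).trans (hlT.subset_classOf (mem_insert_self _ _))
    have hlS : ¬IsLinked R l F.S := by
      intro hlS
      refine F.c_notMem ((F.isLinked_iff.1 hlS).resolve_left hli ▸ mem_classOf_of_rel ?_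
        (F.subset_classOf hlS (mem_of_mem_erase ht)))
      exact hlT _ (mem_insert_self _ _) t (mem_insert_of_mem ht)
    refine ⟨l, hlS, hs, hsub, fun hsc => hlS (isLinked_of_subset_classOf (v := F.c) ?_)⟩
    rw [← insert_erase hs]
    exact insert_subset hsc hsub
  have : Nonempty ι := ⟨F.i⟩
  have : Nonempty V := ⟨F.s₀⟩
  choose! f hfS hfO using hf
  have hinj : Set.InjOn f (F.S : Set V) := fun s hs s' hs' h =>
    (h ▸ hfO s' hs').eq_of_notMem hs (hfO s hs).2.2
  have hsurj : Set.SurjOn f (F.S : Set V) ((linkColors R F.S)ᶜ : Finset ι) :=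
    surjOn_of_injOn_of_card_le f (fun s hs => by simpa using hfS s hs) hinj
      (by rw [F.card_compl_linkColors hι, F.card_S])
  have hinv (l : ι) (hl : ¬IsLinked R l F.S) :=
    Function.invFunOn_pos (hsurj (by simpa using hl))
  refine ⟨Function.invFunOn f F.S, fun l hl => ?_, fun l hl l' hl' h => ?_⟩
  · obtain ⟨hmem, hfl⟩ := hinv l hl
    have := hfO _ hmem
    rwa [hfl] at this
  · rw [← (hinv l hl).2, h, (hinv l' hl').2]

omit hr in
lemma mem_classOf_c_of_four_le (h4 : 4 ≤ r) (hm : IsLinked R m F.S)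
    (hv : v ∉ classOf R m F.s₀) (hl : ¬IsLinked R l F.S) : v ∈ classOf R l F.c := by
  obtain ⟨o, hout, hinj⟩ := F.exists_outliers (by omega) hι h2
  obtain ⟨hoS, hosub, -⟩ := hout l hl
  have hvS := F.notMem_S_of_notMem_classOf hm hv
  have herase : 2 ≤ #(F.S.erase (o l)) := by rw [card_erase_of_mem hoS, F.card_S]; omega
  obtain ⟨t, ht⟩ : (F.S.erase (o l)).Nonempty := card_pos.1 (by omega)
  have hsub : linkColors R (insert v (F.S.erase (o l))) ⊆
      insert l ((linkColors R F.S).erase m) := by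
    intro l' hl'
    have hl'T := mem_linkColors.1 hl'
    rw [mem_insert, mem_erase, mem_linkColors]
    by_cases hl'S : IsLinked R l' F.S
    · refine Or.inr ⟨?_, hl'S⟩
      rintro rfl
      exact hv (mem_classOf_of_rel (hl'T v (mem_insert_self _ _) t (mem_insert_of_mem ht))
        (F.subset_classOf hm (mem_of_mem_erase ht)))
    · refine Or.inl (by_contra fun hne => ?_)
      -- the `l'`-linked set would contain the outlier of `l'` and another vertex of `S`
      have ho' : o l' ∈ F.S.erase (o l) :=
        mem_erase.2 ⟨fun h => hne (hinj hl'S hl h), (hout l' hl'S).1⟩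
      obtain ⟨t', ht', hto⟩ := exists_mem_ne herase (o l')
      exact hto ((hout l' hl'S).eq_of_notMem (mem_of_mem_erase ht')
        (hl'T.notMem_classOf (mem_insert_of_mem ht') (mem_insert_of_mem ho') (hout l' hl'S).2.2))
  have hl_mem : l ∈ linkColors R (insert v (F.S.erase (o l))) := by
    by_contra hlT
    have h1 := card_le_card ((subset_insert_iff_of_notMem hlT).1 hsub)
    have hlink := h2 _ (by rw [card_insert_erase hvS hoS, F.card_S])
    rw [card_erase_of_mem (mem_linkColors.2 hm), F.linkColors_S, card_pair F.i_ne_j] at h1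
    omega
  exact mem_classOf_of_rel ((mem_linkColors.1 hl_mem) v (mem_insert_self _ _) t
    (mem_insert_of_mem ht)) (hosub ht)

omit hr in
lemma rel_of_not_rel_of_not_rel (h3 : r = 3) {x y : V} (hi : ¬R F.i x y) (hj : ¬R F.j x y)
    (hl : ¬IsLinked R l F.S) : R l x y := by
  have hxy : x ≠ y := by rintro rfl; exact hi ((R F.i).refl' x)
  have hsub : linkColors R {x, y} ⊆ (linkColors R F.S)ᶜ := by
    intro l' hl'
    rw [mem_compl]
    intro hl'S
    have hR := (mem_linkColors.1 hl') x (by simp) y (by simp)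
    obtain rfl | rfl := F.isLinked_iff.1 (mem_linkColors.1 hl'S)
    · exact hi hR
    · exact hj hR
  have heq := eq_of_subset_of_card_le hsub (by
    rw [F.card_compl_linkColors hι]
    exact (h2 _ (by rw [card_pair hxy]; omega)).trans' (by omega))
  exact (mem_linkColors.1 (heq ▸ mem_compl.2 (mt mem_linkColors.1 hl))) x (by simp) y (by simp)

omit hr in
lemma mem_classOf_c_of_eq_three (h3 : r = 3) (hm : IsLinked R m F.S)
    (hv : v ∉ classOf R m F.s₀) (hl : ¬IsLinked R l F.S) : v ∈ classOf R l F.c := by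
  rw [mem_classOf]
  obtain rfl | rfl := F.isLinked_iff.1 hm
  · have hvj := (F.mem_classOf_i_or_mem_classOf_j (by omega) hι h2 v).resolve_left hv
    exact F.rel_of_not_rel_of_not_rel hι h2 h3
      (fun h => not_rel_of_mem_of_notMem F.c_mem hv ((R _).symm' h))
      (not_rel_of_mem_of_notMem hvj F.c_notMem) hl
  · have hvi := (F.mem_classOf_i_or_mem_classOf_j (by omega) hι h2 v).resolve_right hv
    have hvd := F.rel_of_not_rel_of_not_rel hι h2 h3 (not_rel_of_mem_of_notMem hvi F.d_notMem)
      (fun h => not_rel_of_mem_of_notMem F.d_mem hv ((R _).symm' h)) hl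
    have hcd := F.rel_of_not_rel_of_not_rel hι h2 h3
      (not_rel_of_mem_of_notMem F.c_mem F.d_notMem)
      (fun h => not_rel_of_mem_of_notMem F.d_mem F.c_notMem ((R _).symm' h)) hl
    exact (R l).trans' hvd ((R l).symm' hcd)

lemma mem_classOf_c (hm : IsLinked R m F.S) (hv : v ∉ classOf R m F.s₀)
    (hl : ¬IsLinked R l F.S) : v ∈ classOf R l F.c := by
  obtain h3 | h4 := hr.eq_or_lt
  · exact F.mem_classOf_c_of_eq_three hι h2 h3.symm hm hv hl
  · exact F.mem_classOf_c_of_four_le hι h2 h4 hm hv hl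

lemma eq_of_notMem_classOf_c {la lb : ι} (hv : v ∈ classOf R F.j F.s₀)
    (hla : ¬IsLinked R la F.S) (hlb : ¬IsLinked R lb F.S)
    (hva : v ∉ classOf R la F.c) (hvb : v ∉ classOf R lb F.c) : la = lb := by
  by_contra hab
  obtain ⟨o, hout, hinj⟩ := F.exists_outliers hr hι h2
  have hoab : o la ≠ o lb := fun h => hab (hinj hla hlb h)
  have hvS : v ∉ F.S := fun hvS =>
    hoab (((hout la hla).eq_of_notMem hvS hva).symm.trans ((hout lb hlb).eq_of_notMem hvS hvb))
  -- exchange the outliers of `la` and `lb` in `S` for `c` and `v`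
  set U := insert F.c (F.S.erase (o la))
  set T := insert v (U.erase (o lb))
  have hoU (l : ι) (hl : ¬IsLinked R l F.S) (hla' : l ≠ la) : o l ∈ U :=
    mem_insert_of_mem (mem_erase.2 ⟨fun h => hla' (hinj hl hla h), (hout l hl).1⟩)
  have hcT : F.c ∈ T := mem_insert_of_mem (mem_erase.2
    ⟨fun h => F.c_notMem_S (h ▸ (hout lb hlb).1), mem_insert_self _ _⟩)
  have hvT : v ∈ T := mem_insert_self _ _
  have hT : #T = r - 1 := by
    have hvU : v ∉ U := by
      rw [mem_insert, not_or]
      exact ⟨fun h => hva (h ▸ mem_classOf_self), fun h => hvS (mem_of_mem_erase h)⟩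
    rw [card_insert_erase hvU (hoU lb hlb (Ne.symm hab)),
      card_insert_erase F.c_notMem_S (hout la hla).1, F.card_S]
  have hsub : linkColors R T ⊆ {F.i} := by
    intro l hl
    have hlT := mem_linkColors.1 hl
    rw [mem_singleton]
    by_cases hlS : IsLinked R l F.S
    · refine (F.isLinked_iff.1 hlS).resolve_right fun hlj => ?_
      subst hlj
      exact F.c_notMem (mem_classOf_of_rel (hlT _ hcT _ hvT) hv)
    · exfalso
      have hlv : v ∈ classOf R l F.c := mem_classOf.2 (hlT _ hvT _ hcT)
      have hla' : l ≠ la := by rintro rfl; exact hva hlv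
      have hlb' : l ≠ lb := by rintro rfl; exact hvb hlv
      have hoT : o l ∈ T :=
        mem_insert_of_mem (mem_erase.2 ⟨fun h => hlb' (hinj hlS hlb h), hoU l hlS hla'⟩)
      exact hlT.notMem_classOf hcT hoT (hout l hlS).2.2 mem_classOf_self
  have := (h2 T hT).trans (card_le_card hsub)
  rw [card_singleton] at this
  omega

lemma card_filter_notMem_classOf_anchor_le_one (v : V) :
    #{l | v ∉ classOf R l (F.anchor l)} ≤ 1 := by
  refine card_le_one.2 fun a ha b hb => ?_
  rw [mem_filter_univ] at ha hb
  unfold anchor at ha hb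
  by_cases haS : IsLinked R a F.S <;> by_cases hbS : IsLinked R b F.S <;>
    simp only [haS, hbS, if_true, if_false] at ha hb
  · have hv := F.mem_classOf_i_or_mem_classOf_j hr hι h2 v
    obtain rfl | rfl := F.isLinked_iff.1 haS <;> obtain rfl | rfl := F.isLinked_iff.1 hbS <;>
      tauto
  · exact absurd (F.mem_classOf_c hr hι h2 haS ha hbS) hb
  · exact absurd (F.mem_classOf_c hr hι h2 hbS hb haS) ha
  · have hvj : v ∈ classOf R F.j F.s₀ := by
      by_contra hvj
      exact ha (F.mem_classOf_c hr hι h2 (F.isLinked_iff.2 (Or.inr rfl)) hvj haS)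
    exact F.eq_of_notMem_classOf_c hr hι h2 hvj haS hbS ha hb

lemma exists_le_card_classOf_anchor :
    ∃ l, r * Fintype.card V ≤ (r + 1) * #(classOf R l (F.anchor l)) := by
  have hcount := card_mul_le_sum_card _ (F.card_filter_notMem_classOf_anchor_le_one hr hι h2)
  rw [hι, Nat.add_sub_cancel] at hcount
  obtain ⟨l, -, hl⟩ := exists_le_of_sum_le ⟨F.i, mem_univ _⟩
    (f := fun _ => r * Fintype.card V) (g := fun l => (r + 1) * #(classOf R l (F.anchor l))) (by
      rw [sum_const, card_univ, hι, smul_eq_mul, ← mul_sum]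
      exact Nat.mul_le_mul_left _ (by linarith))
  exact ⟨l, hl⟩

end Frame

lemma exists_frame {r : ℕ} (hr : 3 ≤ r) (hV : r - 1 ≤ Fintype.card V)
    (hι : Fintype.card ι = r + 1)
    (hsmall : ∀ l v, (r + 1) * #(classOf R l v) < r * Fintype.card V)
    (h2 : ∀ T : Finset V, #T = r - 1 → 2 ≤ #(linkColors R T))
    (hescape : ∀ T : Finset V, #T = r - 1 → ∀ l v, T ⊆ classOf R l v →
      ∃ z ∉ classOf R l v, (linkColors R (insert z T)).Nonempty) :
    Nonempty (Frame R r) := by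
  obtain ⟨S, hS, hS2⟩ := exists_card_linkColors_le_two hι hsmall hr hV
  obtain ⟨i, j, hij, hSij⟩ := card_eq_two.1 (le_antisymm hS2 (h2 S hS))
  obtain ⟨s₀, hs₀⟩ := card_pos.1 (by omega : 0 < #S)
  obtain ⟨c, hc, hc'⟩ := exists_mem_classOf_notMem_classOf hSij hs₀ (hescape S hS)
  obtain ⟨d, hd, hd'⟩ :=
    exists_mem_classOf_notMem_classOf (pair_comm i j ▸ hSij) hs₀ (hescape S hS)
  exact ⟨⟨S, i, j, s₀, c, d, hS, hSij, hij, hs₀, hc, hc', hd, hd'⟩⟩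

theorem exists_le_card_classOf {r : ℕ} (hr : 3 ≤ r) (hV : r ≤ Fintype.card V)
    (hι : Fintype.card ι = r + 1)
    (hescape : ∀ T A : Finset V, #T = r - 1 → T ⊆ A → (r + 1) * #A < r * Fintype.card V →
      ∃ z ∉ A, (linkColors R (insert z T)).Nonempty) :
    ∃ l v, r * Fintype.card V ≤ (r + 1) * #(classOf R l v) := by
  by_contra! hsmall
  have hescape' (T : Finset V) (hT : #T = r - 1) (l : ι) (v : V) (hTv : T ⊆ classOf R l v) :=
    hescape T _ hT hTv (hsmall l v)
  have h2 (T : Finset V) (hT : #T = r - 1) : 2 ≤ #(linkColors R T) := by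
    -- `T` itself is small, so escaping from it shows that some colour links `T`
    have hsq : (r + 1) * (r - 1) < r * r := by
      obtain ⟨k, rfl⟩ : ∃ k, r = k + 1 := ⟨r - 1, by omega⟩
      simp only [Nat.add_sub_cancel]
      nlinarith
    obtain ⟨z, -, hz⟩ := hescape T T hT subset_rfl
      (by rw [hT]; exact hsq.trans_le (Nat.mul_le_mul_left r hV))
    exact two_le_card_linkColors (card_pos.1 (by omega))
      (hz.mono (linkColors_anti (subset_insert z T))) (hescape' T hT)
  obtain ⟨F⟩ := exists_frame hr (by omega) hι hsmall h2 hescape'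
  obtain ⟨l, hl⟩ := F.exists_le_card_classOf_anchor hr hι h2
  exact (hsmall l _).not_ge hl

end SetoidFamily

section Hypergraph

open SetoidFamily

variable {V κ : Type*}

lemma connBy_equivalence (E : Set (Finset V)) : Equivalence (connBy E) where
  refl _ := Relation.ReflTransGen.refl
  symm h := by
    induction h with
    | refl => exact Relation.ReflTransGen.refl
    | tail _ hstep ih =>
      obtain ⟨e, he, hu, hw⟩ := hstep
      exact Relation.ReflTransGen.head ⟨e, he, hw, hu⟩ ih
  trans := Relation.ReflTransGen.trans

def colorSetoid (E : Finset (Finset V)) (χ : Finset V → κ) (c : κ) : Setoid V :=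
  ⟨connBy {e | e ∈ E ∧ χ e = c}, connBy_equivalence _⟩

variable {E : Finset (Finset V)} {χ : Finset V → κ}

lemma isLinked_colorSetoid {e : Finset V} (he : e ∈ E) : IsLinked (colorSetoid E χ) (χ e) e :=
  fun _ hu _ hw => Relation.ReflTransGen.single ⟨e, ⟨he, rfl⟩, hu, hw⟩

lemma card_classOf_colorSetoid [Fintype V] (c : κ) (v : V) :
    #(classOf (colorSetoid E χ) c v) = (compOf {e | e ∈ E ∧ χ e = c} v).ncard := by
  have : compOf {e | e ∈ E ∧ χ e = c} v = classOf (colorSetoid E χ) c v := by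
    ext u
    simp only [coe_filter_univ, classOf]
    rfl
  rw [this, Set.ncard_coe_finset]

lemma exists_insert_mem_of_card_lt [DecidableEq V] {T A : Finset V}
    (huni : ∀ e ∈ E, #e = #T + 1) (hTA : T ⊆ A) (hA : #A < #{e ∈ E | T ⊆ e} + #T) :
    ∃ z ∉ A, insert z T ∈ E := by
  by_contra! h
  have hsub : {e ∈ E | T ⊆ e} ⊆ (A \ T).image (insert · T) := by
    intro e he
    obtain ⟨heE, hTe⟩ := mem_filter.1 he
    obtain ⟨z, hzT, rfl⟩ := exists_eq_insert_iff.2 ⟨hTe, (huni e heE).symm⟩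
    exact mem_image.2 ⟨z, mem_sdiff.2 ⟨by_contra fun hz => h z hz heE, hzT⟩, rfl⟩
  have := (card_le_card hsub).trans card_image_le
  rw [card_sdiff_of_subset hTA] at this
  have := card_le_card hTA
  omega

end Hypergraph

open SetoidFamily in
theorem stmt4 (n r : ℕ) (hr : 3 ≤ r) (hn : r ≤ n)
    (E : Finset (Finset (Fin n))) (huni : ∀ e ∈ E, e.card = r)
    (hdeg : ∀ S : Finset (Fin n), S.card = r - 1 →
      (r : ℚ) * n / (r + 1) - ((r : ℚ) - 1) ≤ {e | e ∈ E ∧ S ⊆ e}.ncard)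
    (χ : Finset (Fin n) → Fin (r + 1)) :
    ∃ (c : Fin (r + 1)) (v : Fin n),
      (r : ℚ) * n / (r + 1) ≤ (compOf {e | e ∈ E ∧ χ e = c} v).ncard := by
  have hpos : (0 : ℚ) < r + 1 := by positivity
  have hescape (T A : Finset (Fin n)) (hT : #T = r - 1) (hTA : T ⊆ A)
      (hA : (r + 1) * #A < r * n) : ∃ z ∉ A, insert z T ∈ E := by
    have hdegT : (r : ℚ) * n / (r + 1) - (r - 1) ≤ #{e ∈ E | T ⊆ e} := by
      convert hdeg T hT using 2
      rw [← Set.ncard_coe_finset, coe_filter]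
    have hAq : (#A : ℚ) < r * n / (r + 1) := by
      rw [lt_div_iff₀' hpos]
      exact_mod_cast hA
    have hAT : (#A : ℚ) < #{e ∈ E | T ⊆ e} + ((r - 1 : ℕ) : ℚ) := by
      rw [Nat.cast_sub (by omega), Nat.cast_one]
      linarith
    exact exists_insert_mem_of_card_lt (fun e he => by rw [huni e he, hT]; omega) hTA
      (by rw [hT]; exact_mod_cast hAT)
  obtain ⟨c, v, hcv⟩ := exists_le_card_classOf (R := colorSetoid E χ) hr (by simpa using hn)
    (by simp) fun T A hT hTA hA => by
      obtain ⟨z, hz, hzE⟩ := hescape T A hT hTA (by simpa using hA)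
      exact ⟨z, hz, _, mem_linkColors.2 (isLinked_colorSetoid hzE)⟩
  refine ⟨c, v, ?_⟩
  rw [← card_classOf_colorSetoid, div_le_iff₀ hpos]
  simpa [mul_comm] using (Nat.cast_le (α := ℚ)).2 hcv
end

section
/- Let r ≥ 3, let G be an r-uniform hypergraph on n vertices with δ_{r−1}(G) ≥ rn/(r+1) − (r−1), and fix an (r+1)-coloring of E(G) and a vertex x. For i ∈ {1,...,r+1}, let C_i be the component of color i containing x, F_i = V(G) \ V(C_i), and F_i* = F_i \ ⋃_{j≠i} F_j. Suppose |F_i| > n/(r+1) for all i. Then for all distinct h, i, j ∈ {1,...,r+1}, either F_h ∩ F_i = ∅ or F_j* = ∅. -/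
open Finset

lemma mem_compOf_self {V : Type*} (E : Set (Finset V)) (v : V) : v ∈ compOf E v :=
  Relation.ReflTransGen.refl

lemma comp_closed {V : Type*} {E' : Set (Finset V)} {x y z : V} {e : Finset V}
    (he : e ∈ E') (hy : y ∈ e) (hz : z ∈ e) (hyc : y ∈ compOf E' x) :
    z ∈ compOf E' x :=
  Relation.ReflTransGen.head ⟨e, he, hz, hy⟩ hyc

open Classical in
/-- Key extension lemma: any small set can be extended to an edge meeting every `F l`. -/
lemma cover_edge (r n : ℕ) (hr : 3 ≤ r) (hn : r ≤ n)
    (E : Finset (Finset (Fin n)))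
    (huni : ∀ e ∈ E, e.card = r)
    (hdeg : ∀ S : Finset (Fin n), S.card = r - 1 →
      (r : ℚ) * n / (r + 1) - ((r : ℚ) - 1) ≤ {e | e ∈ E ∧ S ⊆ e}.ncard)
    (F : Fin (r + 1) → Set (Fin n))
    (hbig : ∀ i, (n : ℚ) / (r + 1) < (F i).ncard) :
    ∀ k (S₀ : Finset (Fin n)), S₀.card + k + 1 = r →
      S₀.card + (Finset.univ.filter (fun l => ∀ y ∈ S₀, y ∉ F l)).card ≤ r →
      ∃ e ∈ E, S₀ ⊆ e ∧ ∀ l, ∃ y ∈ e, y ∈ F l := by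
  intro k
  induction k with
  | zero =>
    intro S₀ hcard hle
    have hS₀ : S₀.card = r - 1 := by omega
    set U := Finset.univ.filter (fun l => ∀ y ∈ S₀, y ∉ F l) with hUdef
    have hU1 : U.card ≤ 1 := by omega
    set ext := (Finset.univ \ S₀).filter (fun w => insert w S₀ ∈ E) with hextdef
    have hins : ∀ e ∈ E, S₀ ⊆ e → ∃ w ∈ ext, insert w S₀ = e := by
      intro e heE hsub
      have hce : e.card = r := huni e heE
      have h1 : (e \ S₀).card = 1 := by
        rw [Finset.card_sdiff_of_subset hsub]; omega
      obtain ⟨w, hw⟩ := Finset.card_eq_one.mp h1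
      have hwe : w ∈ e \ S₀ := hw ▸ Finset.mem_singleton_self w
      rw [Finset.mem_sdiff] at hwe
      have heq : insert w S₀ = e := by
        apply Finset.eq_of_subset_of_card_le
        · intro z hz
          rcases Finset.mem_insert.mp hz with h | h
          · exact h ▸ hwe.1
          · exact hsub h
        · rw [Finset.card_insert_of_notMem hwe.2]; omega
      refine ⟨w, ?_, heq⟩
      rw [hextdef, Finset.mem_filter, Finset.mem_sdiff]
      exact ⟨⟨Finset.mem_univ w, hwe.2⟩, heq ▸ heE⟩
    have hkey : {e | e ∈ E ∧ S₀ ⊆ e}.ncard = ext.card := by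
      have h1 : {e | e ∈ E ∧ S₀ ⊆ e} = ↑(E.filter (fun e => S₀ ⊆ e)) := by
        ext e; simp [Finset.mem_filter]
      rw [h1, Set.ncard_coe_finset]
      refine (Finset.card_bij (fun w _ => insert w S₀) ?_ ?_ ?_).symm
      · intro w hw
        rw [hextdef, Finset.mem_filter, Finset.mem_sdiff] at hw
        exact Finset.mem_filter.mpr ⟨hw.2, Finset.subset_insert _ _⟩
      · intro w hw w' hw' heq
        rw [hextdef, Finset.mem_filter, Finset.mem_sdiff] at hw hw'
        have heq' : insert w S₀ = insert w' S₀ := heq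
        have : w ∈ insert w' S₀ := heq' ▸ Finset.mem_insert_self w S₀
        rcases Finset.mem_insert.mp this with h | h
        · exact h
        · exact absurd h hw.1.2
      · intro e he
        rw [Finset.mem_filter] at he
        obtain ⟨w, hw, heq⟩ := hins e he.1 he.2
        exact ⟨w, hw, heq⟩
    have hextle : (r : ℚ) * n / (r + 1) - ((r : ℚ) - 1) ≤ (ext.card : ℚ) := by
      have := hdeg S₀ hS₀
      rwa [hkey] at this
    by_cases hUne : U.Nonempty
    · obtain ⟨m, hm⟩ := hUne
      have hmU : ∀ y ∈ S₀, y ∉ F m := (Finset.mem_filter.mp hm).2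
      have hFmfin : (F m).Finite := Set.toFinite _
      have hFmcard : (n : ℚ) / (r + 1) < (hFmfin.toFinset.card : ℚ) := by
        have := hbig m
        rwa [Set.ncard_eq_toFinset_card _ hFmfin] at this
      have hFmsub : hFmfin.toFinset ⊆ Finset.univ \ S₀ := by
        intro y hy
        rw [Set.Finite.mem_toFinset] at hy
        exact Finset.mem_sdiff.mpr ⟨Finset.mem_univ y, fun h => hmU y h hy⟩
      have hextsub : ext ⊆ Finset.univ \ S₀ := Finset.filter_subset _ _
      have hne : (hFmfin.toFinset ∩ ext).Nonempty := by
        by_contra hcon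
        rw [Finset.not_nonempty_iff_eq_empty] at hcon
        have hdisj : Disjoint hFmfin.toFinset ext :=
          Finset.disjoint_iff_inter_eq_empty.mpr hcon
        have hunion : (hFmfin.toFinset ∪ ext).card = hFmfin.toFinset.card + ext.card :=
          Finset.card_union_of_disjoint hdisj
        have hsubU : hFmfin.toFinset ∪ ext ⊆ Finset.univ \ S₀ :=
          Finset.union_subset hFmsub hextsub
        have hle2 : hFmfin.toFinset.card + ext.card ≤ (Finset.univ \ S₀).card :=
          hunion ▸ Finset.card_le_card hsubU
        have hB : (Finset.univ \ S₀).card + (r - 1) = n := by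
          rw [Finset.card_sdiff_of_subset (Finset.subset_univ S₀), hS₀]
          have : (Finset.univ : Finset (Fin n)).card = n := by simp
          omega
        have hcast : ((Finset.univ \ S₀).card : ℚ) = (n : ℚ) - ((r : ℚ) - 1) := by
          have h1 : ((Finset.univ \ S₀).card : ℚ) + (((r : ℕ) - 1 : ℕ) : ℚ) = (n : ℚ) := by
            exact_mod_cast congrArg (fun t : ℕ => (t : ℚ)) hB
          have h2 : (((r : ℕ) - 1 : ℕ) : ℚ) = (r : ℚ) - 1 := by
            have : (1 : ℕ) ≤ r := by omega
            push_cast [this]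
            ring
          rw [h2] at h1
          linarith
        have hsum : (n : ℚ) / (r + 1) + ((r : ℚ) * n / (r + 1) - ((r : ℚ) - 1))
            = (n : ℚ) - ((r : ℚ) - 1) := by
          field_simp
          ring
        have hle3 : (hFmfin.toFinset.card : ℚ) + (ext.card : ℚ) ≤ (n : ℚ) - ((r : ℚ) - 1) := by
          rw [← hcast]
          exact_mod_cast hle2
        linarith
      obtain ⟨w, hw⟩ := hne
      rw [Finset.mem_inter] at hw
      have hwext := hw.2
      rw [hextdef, Finset.mem_filter, Finset.mem_sdiff] at hwext
      refine ⟨insert w S₀, hwext.2, Finset.subset_insert _ _, ?_⟩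
      intro l
      by_cases hl : ∃ y ∈ S₀, y ∈ F l
      · obtain ⟨y, hy1, hy2⟩ := hl
        exact ⟨y, Finset.mem_insert_of_mem hy1, hy2⟩
      · have hlU : l ∈ U := by
          rw [hUdef, Finset.mem_filter]
          push_neg at hl
          exact ⟨Finset.mem_univ l, hl⟩
        have hlm : l = m := Finset.card_le_one.mp hU1 l hlU m hm
        refine ⟨w, Finset.mem_insert_self w S₀, ?_⟩
        rw [hlm]
        exact (Set.Finite.mem_toFinset _).mp hw.1
    · rw [Finset.not_nonempty_iff_eq_empty] at hUne
      have hpos : (0 : ℚ) < (r : ℚ) * n / (r + 1) - ((r : ℚ) - 1) := by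
        rw [sub_pos, lt_div_iff₀ (by positivity)]
        have h1 : (3 : ℚ) ≤ (r : ℚ) := by exact_mod_cast hr
        have h2 : (r : ℚ) ≤ (n : ℚ) := by exact_mod_cast hn
        nlinarith
      have hextpos : 0 < ext.card := by
        have : (0 : ℚ) < (ext.card : ℚ) := lt_of_lt_of_le hpos hextle
        exact_mod_cast this
      obtain ⟨w, hw⟩ := Finset.card_pos.mp hextpos
      have hwext := hw
      rw [hextdef, Finset.mem_filter, Finset.mem_sdiff] at hwext
      refine ⟨insert w S₀, hwext.2, Finset.subset_insert _ _, ?_⟩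
      intro l
      have hlU : l ∉ U := by rw [hUne]; exact Finset.notMem_empty l
      rw [hUdef, Finset.mem_filter] at hlU
      push_neg at hlU
      obtain ⟨y, hy1, hy2⟩ := hlU (Finset.mem_univ l)
      exact ⟨y, Finset.mem_insert_of_mem hy1, hy2⟩
  | succ k ih =>
    intro S₀ hcard hle
    set U := Finset.univ.filter (fun l => ∀ y ∈ S₀, y ∉ F l) with hUdef
    have hUmono : ∀ y, (Finset.univ.filter (fun l => ∀ z ∈ insert y S₀, z ∉ F l)) ⊆ U := by
      intro y l hl
      rw [Finset.mem_filter] at hl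
      rw [hUdef, Finset.mem_filter]
      exact ⟨Finset.mem_univ l, fun z hz => hl.2 z (Finset.mem_insert_of_mem hz)⟩
    by_cases hUne : U.Nonempty
    · obtain ⟨m, hm⟩ := hUne
      have hmU : ∀ y ∈ S₀, y ∉ F m := (Finset.mem_filter.mp hm).2
      have hFm : (F m).Nonempty := by
        have h0 : (0 : ℚ) ≤ (n : ℚ) / (r + 1) := by positivity
        have h1 : (0 : ℚ) < ((F m).ncard : ℚ) := lt_of_le_of_lt h0 (hbig m)
        have h2 : 0 < (F m).ncard := by exact_mod_cast h1
        exact Set.nonempty_of_ncard_ne_zero (by omega)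
      obtain ⟨y, hy⟩ := hFm
      have hyS : y ∉ S₀ := fun hmem => hmU y hmem hy
      have hU'sub : (Finset.univ.filter (fun l => ∀ z ∈ insert y S₀, z ∉ F l)) ⊆ U.erase m := by
        intro l hl
        have hlU : l ∈ U := hUmono y hl
        rw [Finset.mem_filter] at hl
        rw [Finset.mem_erase]
        refine ⟨?_, hlU⟩
        intro heq
        exact hl.2 y (Finset.mem_insert_self _ _) (heq ▸ hy)
      have hUc := Finset.card_le_card hU'sub
      have herase : (U.erase m).card = U.card - 1 := Finset.card_erase_of_mem hm
      have hUpos : 0 < U.card := Finset.card_pos.mpr ⟨m, hm⟩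
      obtain ⟨e, he, hsub, hmeet⟩ := ih (insert y S₀)
        (by rw [Finset.card_insert_of_notMem hyS]; omega)
        (by rw [Finset.card_insert_of_notMem hyS]; omega)
      exact ⟨e, he, fun z hz => hsub (Finset.mem_insert_of_mem hz), hmeet⟩
    · rw [Finset.not_nonempty_iff_eq_empty] at hUne
      have huniv : (Finset.univ : Finset (Fin n)).card = n := by simp
      have hltn : S₀.card < n := by omega
      have hsd : 0 < (Finset.univ \ S₀).card := by
        rw [Finset.card_sdiff_of_subset (Finset.subset_univ S₀)]
        omega
      obtain ⟨y, hy⟩ := Finset.card_pos.mp hsd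
      have hyS : y ∉ S₀ := (Finset.mem_sdiff.mp hy).2
      have hU'sub : (Finset.univ.filter (fun l => ∀ z ∈ insert y S₀, z ∉ F l)) ⊆ U :=
        hUmono y
      have hUc := Finset.card_le_card hU'sub
      rw [hUne] at hUc
      simp only [Finset.card_empty, Nat.le_zero] at hUc
      obtain ⟨e, he, hsub, hmeet⟩ := ih (insert y S₀)
        (by rw [Finset.card_insert_of_notMem hyS]; omega)
        (by rw [Finset.card_insert_of_notMem hyS]; omega)
      exact ⟨e, he, fun z hz => hsub (Finset.mem_insert_of_mem hz), hmeet⟩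

theorem stmt10 (r n : ℕ) (hr : 3 ≤ r)
    (E : Finset (Finset (Fin n))) (huni : ∀ e ∈ E, e.card = r)
    (hdeg : ∀ S : Finset (Fin n), S.card = r - 1 →
      (r : ℚ) * n / (r + 1) - ((r : ℚ) - 1) ≤ {e | e ∈ E ∧ S ⊆ e}.ncard)
    (χ : Finset (Fin n) → Fin (r + 1)) (x : Fin n)
    (F : Fin (r + 1) → Set (Fin n))
    (hF : ∀ i, F i = (compOf {e | e ∈ E ∧ χ e = i} x)ᶜ)
    (hbig : ∀ i, (n : ℚ) / (r + 1) < (F i).ncard) :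
    ∀ h i j : Fin (r + 1), h ≠ i → h ≠ j → i ≠ j →
      F h ∩ F i = ∅ ∨ F j \ (⋃ (l : Fin (r + 1)) (_ : l ≠ j), F l) = ∅ := by
  classical
  intro h i j hhi hhj hij
  by_contra hcon
  push_neg at hcon
  obtain ⟨hFhi, hFj⟩ := hcon
  obtain ⟨v, hv⟩ := hFhi
  obtain ⟨u, hu⟩ := hFj
  obtain ⟨hvh, hvi⟩ := hv
  obtain ⟨huj, hunion⟩ := hu
  have hustar : ∀ l, l ≠ j → u ∉ F l := by
    intro l hl hml
    exact hunion (Set.mem_iUnion.mpr ⟨l, Set.mem_iUnion.mpr ⟨hl, hml⟩⟩)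
  by_cases hn : r ≤ n
  · have hxF : ∀ l, x ∉ F l := by
      intro l hx
      rw [hF l] at hx
      exact hx (mem_compOf_self _ _)
    have huv : u ≠ v := by
      intro heq
      exact hustar h hhj (heq ▸ hvh)
    have hxv : x ≠ v := by
      intro heq
      exact hxF h (heq ▸ hvh)
    -- Step 1: find an edge containing u and v meeting every F l
    have hc2 : ({u, v} : Finset (Fin n)).card = 2 := Finset.card_pair huv
    have hUb1 : ({u, v} : Finset (Fin n)).card +
        (Finset.univ.filter (fun l => ∀ y ∈ ({u, v} : Finset (Fin n)), y ∉ F l)).card ≤ r := by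
      have hsub : (Finset.univ.filter (fun l => ∀ y ∈ ({u, v} : Finset (Fin n)), y ∉ F l))
          ⊆ Finset.univ \ {h, i, j} := by
        intro l hl
        rw [Finset.mem_filter] at hl
        have hvl : v ∉ F l := hl.2 v (by simp)
        have hul : u ∉ F l := hl.2 u (by simp)
        rw [Finset.mem_sdiff]
        refine ⟨Finset.mem_univ l, ?_⟩
        simp only [Finset.mem_insert, Finset.mem_singleton]
        push_neg
        refine ⟨?_, ?_, ?_⟩
        · rintro rfl; exact hvl hvh
        · rintro rfl; exact hvl hvi
        · rintro rfl; exact hul huj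
      have hc3 : ({h, i, j} : Finset (Fin (r + 1))).card = 3 :=
        Finset.card_eq_three.mpr ⟨h, i, j, hhi, hhj, hij, rfl⟩
      have hcd : (Finset.univ \ ({h, i, j} : Finset (Fin (r + 1)))).card = (r + 1) - 3 := by
        rw [Finset.card_sdiff_of_subset (Finset.subset_univ _), hc3]
        simp
      have := Finset.card_le_card hsub
      rw [hcd] at this
      rw [hc2]
      omega
    obtain ⟨e₁, he₁, hsub₁, hmeet₁⟩ := cover_edge r n hr hn E huni hdeg F hbig
      (r - 3) {u, v} (by rw [hc2]; omega) hUb1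
    have hsubF : ∀ z ∈ e₁, z ∈ F (χ e₁) := by
      obtain ⟨y, hy, hyF⟩ := hmeet₁ (χ e₁)
      intro z hz
      rw [hF (χ e₁)]
      intro hzc
      have hyc : y ∈ compOf {e | e ∈ E ∧ χ e = χ e₁} x :=
        comp_closed ⟨he₁, rfl⟩ hz hy hzc
      rw [hF (χ e₁)] at hyF
      exact hyF hyc
    have huj1 : u ∈ F (χ e₁) := hsubF u (hsub₁ (by simp))
    have hcj : χ e₁ = j := by
      by_contra hne
      exact hustar (χ e₁) hne huj1
    have hvFj : v ∈ F j := hcj ▸ hsubF v (hsub₁ (by simp))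
    -- Step 2: find an edge containing x and v meeting every F l — contradiction
    have hcx2 : ({x, v} : Finset (Fin n)).card = 2 := Finset.card_pair hxv
    have hUb2 : ({x, v} : Finset (Fin n)).card +
        (Finset.univ.filter (fun l => ∀ y ∈ ({x, v} : Finset (Fin n)), y ∉ F l)).card ≤ r := by
      have hsub : (Finset.univ.filter (fun l => ∀ y ∈ ({x, v} : Finset (Fin n)), y ∉ F l))
          ⊆ Finset.univ \ {h, i, j} := by
        intro l hl
        rw [Finset.mem_filter] at hl
        have hvl : v ∉ F l := hl.2 v (by simp)
        rw [Finset.mem_sdiff]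
        refine ⟨Finset.mem_univ l, ?_⟩
        simp only [Finset.mem_insert, Finset.mem_singleton]
        push_neg
        refine ⟨?_, ?_, ?_⟩
        · rintro rfl; exact hvl hvh
        · rintro rfl; exact hvl hvi
        · rintro rfl; exact hvl hvFj
      have hc3 : ({h, i, j} : Finset (Fin (r + 1))).card = 3 :=
        Finset.card_eq_three.mpr ⟨h, i, j, hhi, hhj, hij, rfl⟩
      have hcd : (Finset.univ \ ({h, i, j} : Finset (Fin (r + 1)))).card = (r + 1) - 3 := by
        rw [Finset.card_sdiff_of_subset (Finset.subset_univ _), hc3]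
        simp
      have := Finset.card_le_card hsub
      rw [hcd] at this
      rw [hcx2]
      omega
    obtain ⟨e₂, he₂, hsub₂, hmeet₂⟩ := cover_edge r n hr hn E huni hdeg F hbig
      (r - 3) {x, v} (by rw [hcx2]; omega) hUb2
    obtain ⟨y, hy, hyF⟩ := hmeet₂ (χ e₂)
    have hxe₂ : x ∈ e₂ := hsub₂ (by simp)
    have hyc : y ∈ compOf {e | e ∈ E ∧ χ e = χ e₂} x :=
      comp_closed ⟨he₂, rfl⟩ hxe₂ hy (mem_compOf_self _ _)
    rw [hF (χ e₂)] at hyF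
    exact hyF hyc
  · push_neg at hn
    have hE : ∀ e, e ∉ E := by
      intro e he
      have h1 := huni e he
      have h2 : e.card ≤ n := by
        have := Finset.card_le_univ e
        simpa using this
      omega
    have hcomp : ∀ l, compOf {e | e ∈ E ∧ χ e = l} x = {x} := by
      intro l
      ext y
      simp only [Set.mem_singleton_iff]
      constructor
      · intro hy
        rcases Relation.ReflTransGen.cases_head hy with heq | ⟨c, ⟨e, ⟨heE, _⟩, _⟩, _⟩
        · exact heq
        · exact absurd heE (hE e)
      · rintro rfl
        exact mem_compOf_self _ _
    have huxne : u ≠ x := by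
      intro heq
      rw [hF j, hcomp j] at huj
      exact huj (heq ▸ rfl)
    have huh : u ∈ F h := by
      rw [hF h, hcomp h]
      exact huxne
    exact hustar h hhj huh
end

section
/- Let r ≥ 3 and n = k(r+1) + s with 0 ≤ s ≤ r and n ≥ 3r+1. Let V = A ∪ X where A = A_1 ∪ ... ∪ A_{r+1} with |A_i| = k−1 for i ≤ r, |A_{r+1}| = k−(r−s), and X = X_1 ∪ ... ∪ X_r with each |X_i| = 2, all these sets pairwise disjoint. Let G be the r-uniform hypergraph on V obtained from the complete one by deleting every edge e for which there is a partition {P,Q} of {1,...,r} with P,Q nonempty such that e intersects X_i for all i ∈ P and A_j for all j ∈ Q. Then every (r−1)-element subset S of V is contained in at least n − (r−1) − (k+1) edges of G. -/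
open Finset

lemma struct_lemma {n r : ℕ} (G : Fin r → Finset (Fin n))
    (hdisj : ∀ i j, i ≠ j → Disjoint (G i) (G j))
    (e : Finset (Fin n)) (he : e.card = r)
    (hne : ∀ i, (e ∩ G i).Nonempty) :
    (∀ i, (e ∩ G i).card = 1) ∧ e ⊆ univ.biUnion G := by
  have hcard : (univ.biUnion (fun i => e ∩ G i)).card = ∑ i, (e ∩ G i).card :=
    card_biUnion (fun i _ j _ hij =>
      (hdisj i j hij).mono inter_subset_right inter_subset_right)
  have hsub : univ.biUnion (fun i => e ∩ G i) ⊆ e :=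
    biUnion_subset.2 fun i _ => inter_subset_left
  have hle : ∑ i, (e ∩ G i).card ≤ r := by
    calc ∑ i, (e ∩ G i).card = _ := hcard.symm
    _ ≤ e.card := card_le_card hsub
    _ = r := he
  have h1 : ∀ i, 1 ≤ (e ∩ G i).card := fun i => card_pos.2 (hne i)
  have hge : r ≤ ∑ i, (e ∩ G i).card := by
    calc r = ∑ _i : Fin r, 1 := by simp
    _ ≤ _ := Finset.sum_le_sum fun i _ => h1 i
  have heq : ∑ i, (e ∩ G i).card = r := le_antisymm hle hge
  constructor
  · intro i
    by_contra hne1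
    have h2 : 1 < (e ∩ G i).card := lt_of_le_of_ne (h1 i) (Ne.symm hne1)
    have : r < ∑ j, (e ∩ G j).card := by
      calc r = ∑ _j : Fin r, 1 := by simp
      _ < _ := Finset.sum_lt_sum (fun j _ => h1 j) ⟨i, mem_univ i, h2⟩
    omega
  · have heqset : univ.biUnion (fun i => e ∩ G i) = e :=
      eq_of_subset_of_card_le hsub (by rw [hcard, heq, he])
    intro x hx
    rw [← heqset] at hx
    simp only [mem_biUnion] at hx ⊢
    obtain ⟨i, _, hxi⟩ := hx
    exact ⟨i, mem_univ i, (mem_inter.1 hxi).2⟩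


theorem stmt18 (r k s n : ℕ) (hr : 3 ≤ r) (hs : s ≤ r) (hn : n = k * (r + 1) + s)
    (hn' : 3 * r + 1 ≤ n)
    (A : Fin (r + 1) → Finset (Fin n)) (X : Fin r → Finset (Fin n))
    (hA : ∀ i : Fin r, (A i.castSucc).card = k - 1)
    (hAlast : (A (Fin.last r)).card = k - (r - s))
    (hX : ∀ i, (X i).card = 2)
    (hdisjA : ∀ i j, i ≠ j → Disjoint (A i) (A j))
    (hdisjX : ∀ i j, i ≠ j → Disjoint (X i) (X j))
    (hdisjAX : ∀ i j, Disjoint (A i) (X j))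
    (hcover : (Finset.univ.biUnion A) ∪ (Finset.univ.biUnion X) = Finset.univ) :
    ∀ S : Finset (Fin n), S.card = r - 1 →
      n - (r - 1) - (k + 1) ≤
        {e : Finset (Fin n) | e.card = r ∧
          ¬ (∃ P : Finset (Fin r), P.Nonempty ∧ P ≠ Finset.univ ∧
              (∀ i ∈ P, (e ∩ X i).Nonempty) ∧
              (∀ j ∈ Pᶜ, (e ∩ A j.castSucc).Nonempty)) ∧
          S ⊆ e}.ncard := by
  classical
  intro S hS
  have hk : 1 ≤ k := by
    rcases Nat.eq_zero_or_pos k with hk0 | hk0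
    · subst hk0; simp at hn; omega
    · exact hk0
  set Bad : Finset (Fin n) := Sᶜ.filter (fun v => ∃ P : Finset (Fin r), P.Nonempty ∧
      P ≠ Finset.univ ∧ (∀ i ∈ P, ((insert v S) ∩ X i).Nonempty) ∧
      (∀ j ∈ Pᶜ, ((insert v S) ∩ A j.castSucc).Nonempty)) with hBadDef
  -- main structural analysis of a bad vertex
  have hmain : ∀ w ∈ Bad, ∃ i : Fin r, w ∈ X i ∪ A i.castSucc ∧ S ∩ X i = ∅ ∧
      S ∩ A i.castSucc = ∅ ∧
      (∀ i', S ∩ X i' = ∅ → S ∩ A i'.castSucc = ∅ → i' = i) := by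
    intro w hw
    rw [hBadDef, mem_filter, mem_compl] at hw
    obtain ⟨hwS, P, hPne, hPuniv, hXP, hAP⟩ := hw
    set e : Finset (Fin n) := insert w S with he
    have hec : e.card = r := by
      rw [he, card_insert_of_notMem hwS, hS]; omega
    set F : Fin r → Finset (Fin n) := fun i => if i ∈ P then X i else A i.castSucc with hF
    have hFdisj : ∀ i j, i ≠ j → Disjoint (F i) (F j) := by
      intro i j hij
      simp only [hF]
      split_ifs
      · exact hdisjX i j hij
      · exact (hdisjAX j.castSucc i).symm
      · exact hdisjAX i.castSucc j
      · exact hdisjA _ _ (by simpa [Fin.castSucc_inj] using hij)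
    have hFne : ∀ i, (e ∩ F i).Nonempty := by
      intro i
      by_cases h : i ∈ P
      · simpa [hF, h] using hXP i h
      · simpa [hF, h] using hAP i (mem_compl.2 h)
    obtain ⟨h1, hsubU⟩ := struct_lemma F hFdisj e hec hFne
    have hwE : w ∈ e := mem_insert_self w S
    obtain ⟨iw, -, hwF⟩ := mem_biUnion.1 (hsubU hwE)
    -- e ∩ F iw = {w}
    have hXe : e ∩ F iw = {w} := by
      obtain ⟨a, ha⟩ := card_eq_one.1 (h1 iw)
      have hmem : w ∈ e ∩ F iw := mem_inter.2 ⟨hwE, hwF⟩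
      rw [ha] at hmem ⊢
      rw [mem_singleton] at hmem
      rw [hmem]
    have hSF : S ∩ F iw = ∅ := by
      rw [eq_empty_iff_forall_notMem]
      intro u hu
      have hu' : u ∈ e ∩ F iw := mem_inter.2 ⟨mem_insert_of_mem (mem_inter.1 hu).1,
        (mem_inter.1 hu).2⟩
      rw [hXe, mem_singleton] at hu'
      exact hwS (hu' ▸ (mem_inter.1 hu).1)
    -- e is disjoint from the non-chosen class at iw
    have hother : e ∩ (if iw ∈ P then A iw.castSucc else X iw) = ∅ := by
      rw [eq_empty_iff_forall_notMem]
      intro u hu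
      obtain ⟨hue, huC⟩ := mem_inter.1 hu
      obtain ⟨j, -, hjF⟩ := mem_biUnion.1 (hsubU hue)
      by_cases hiw : iw ∈ P
      · rw [if_pos hiw] at huC
        by_cases hj : j ∈ P
        · exact (hdisjAX iw.castSucc j).forall_ne_finset huC (by simpa [hF, hj] using hjF) rfl
        · have hjiw : j ≠ iw := fun h => hj (h ▸ hiw)
          exact (hdisjA iw.castSucc j.castSucc
            (by simpa [Fin.castSucc_inj] using (Ne.symm hjiw))).forall_ne_finset huC
            (by simpa [hF, hj] using hjF) rfl
      · rw [if_neg hiw] at huC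
        by_cases hj : j ∈ P
        · have hjiw : j ≠ iw := fun h => hiw (h ▸ hj)
          exact (hdisjX iw j (Ne.symm hjiw)).forall_ne_finset huC
            (by simpa [hF, hj] using hjF) rfl
        · exact (hdisjAX j.castSucc iw).forall_ne_finset
            (by simpa [hF, hj] using hjF) huC rfl
    have hSX : S ∩ X iw = ∅ := by
      by_cases hiw : iw ∈ P
      · have : F iw = X iw := by simp [hF, hiw]
        rw [← this]; exact hSF
      · rw [eq_empty_iff_forall_notMem]
        intro u hu
        have : u ∈ e ∩ (if iw ∈ P then A iw.castSucc else X iw) := by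
          rw [if_neg hiw]
          exact mem_inter.2 ⟨mem_insert_of_mem (mem_inter.1 hu).1, (mem_inter.1 hu).2⟩
        rw [hother] at this
        exact notMem_empty u this
    have hSA : S ∩ A iw.castSucc = ∅ := by
      by_cases hiw : iw ∈ P
      · rw [eq_empty_iff_forall_notMem]
        intro u hu
        have : u ∈ e ∩ (if iw ∈ P then A iw.castSucc else X iw) := by
          rw [if_pos hiw]
          exact mem_inter.2 ⟨mem_insert_of_mem (mem_inter.1 hu).1, (mem_inter.1 hu).2⟩
        rw [hother] at this
        exact notMem_empty u this
      · have : F iw = A iw.castSucc := by simp [hF, hiw]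
        rw [← this]; exact hSF
    refine ⟨iw, ?_, hSX, hSA, ?_⟩
    · by_cases hiw : iw ∈ P
      · exact mem_union_left _ (by simpa [hF, hiw] using hwF)
      · exact mem_union_right _ (by simpa [hF, hiw] using hwF)
    · intro i' hX' hA'
      by_contra hne'
      obtain ⟨u, hu⟩ := hFne i'
      obtain ⟨hue, huF⟩ := mem_inter.1 hu
      rcases mem_insert.1 hue with rfl | huS
      · exact (hFdisj i' iw hne').forall_ne_finset huF hwF rfl
      · by_cases hi' : i' ∈ P
        · have : u ∈ S ∩ X i' := mem_inter.2 ⟨huS, by simpa [hF, hi'] using huF⟩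
          rw [hX'] at this; exact notMem_empty u this
        · have : u ∈ S ∩ A i'.castSucc := mem_inter.2 ⟨huS, by simpa [hF, hi'] using huF⟩
          rw [hA'] at this; exact notMem_empty u this
  -- Bad has at most k+1 elements
  have hBadCard : Bad.card ≤ k + 1 := by
    rcases Bad.eq_empty_or_nonempty with hB | ⟨v0, hv0⟩
    · simp [hB]
    · obtain ⟨i0, -, -, -, huniq⟩ := hmain v0 hv0
      have hsub : Bad ⊆ X i0 ∪ A i0.castSucc := by
        intro w hw
        obtain ⟨iw, hwmem, hXw, hAw, -⟩ := hmain w hw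
        rwa [huniq iw hXw hAw] at hwmem
      calc Bad.card ≤ (X i0 ∪ A i0.castSucc).card := card_le_card hsub
      _ ≤ (X i0).card + (A i0.castSucc).card := card_union_le _ _
      _ = 2 + (k - 1) := by rw [hX i0, hA i0]
      _ ≤ k + 1 := by omega
  -- final counting
  set Good : Finset (Fin n) := Sᶜ \ Bad with hGoodDef
  have hGoodCard : n - (r - 1) - (k + 1) ≤ Good.card := by
    have h1 : Good.card = Sᶜ.card - Bad.card :=
      card_sdiff_of_subset (filter_subset _ _)
    have h2 : Sᶜ.card = n - (r - 1) := by
      rw [card_compl, hS, Fintype.card_fin]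
    omega
  have hinj : Set.InjOn (fun v => insert v S) Good := by
    intro v hv w hw h
    simp only at h
    have hvS : v ∉ S := by
      have := (mem_sdiff.1 hv).1; rwa [mem_compl] at this
    have hwS : w ∉ S := by
      have := (mem_sdiff.1 hw).1; rwa [mem_compl] at this
    have : v ∈ insert w S := h ▸ mem_insert_self v S
    rcases mem_insert.1 this with h' | h'
    · exact h'
    · exact absurd h' hvS
  have himg : ↑(Good.image (fun v => insert v S)) ⊆
      {e : Finset (Fin n) | e.card = r ∧
        ¬ (∃ P : Finset (Fin r), P.Nonempty ∧ P ≠ Finset.univ ∧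
            (∀ i ∈ P, (e ∩ X i).Nonempty) ∧
            (∀ j ∈ Pᶜ, (e ∩ A j.castSucc).Nonempty)) ∧
        S ⊆ e} := by
    intro e he
    simp only [coe_image, Set.mem_image, mem_coe] at he
    obtain ⟨v, hv, rfl⟩ := he
    obtain ⟨hv1, hv2⟩ := mem_sdiff.1 hv
    have hvS : v ∉ S := by rwa [mem_compl] at hv1
    refine ⟨?_, ?_, subset_insert v S⟩
    · rw [card_insert_of_notMem hvS, hS]; omega
    · intro hP
      exact hv2 (by rw [hBadDef, mem_filter]; exact ⟨hv1, hP⟩)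
  calc n - (r - 1) - (k + 1) ≤ Good.card := hGoodCard
  _ = (Good.image (fun v => insert v S)).card := (card_image_of_injOn hinj).symm
  _ = (↑(Good.image (fun v => insert v S)) : Set (Finset (Fin n))).ncard :=
      (Set.ncard_coe_finset _).symm
  _ ≤ _ := Set.ncard_le_ncard himg (Set.toFinite _)
end
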